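/- arXiv:1504.06002 — 4 statements merged into one kernel-verified Lean document; each statement's English description precedes it below -/
import Mathlib

section
/- If D is a positive diagonal matrix and A is a symmetric matrix such that DAD is diagonally dominant (with nonnegative diagonal), then A is positive semidefinite. -/
/-!
By Gershgorin's circle theorem every eigenvalue of a Hermitian diagonally dominant matrix lies in
a disc `‖μ - A k k‖ ≤ ∑ j ≠ k, ‖A k j‖ ≤ A k k`, so it is nonnegative and the matrix is positive
semidefinite. A positive diagonal `D` is invertible and self-adjoint, so `D * A * D` is a
congruence of `A`, which preserves positive semidefiniteness.
-/

open Matrix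
open scoped ComplexOrder

theorem Matrix.IsHermitian.posSemidef_of_sum_norm_offDiag_le {𝕜 n : Type*} [RCLike 𝕜]
    [Fintype n] [DecidableEq n] {A : Matrix n n 𝕜} (hA : A.IsHermitian)
    (hdd : ∀ i, ∑ j ∈ Finset.univ.erase i, ‖A i j‖ ≤ RCLike.re (A i i)) : A.PosSemidef := by
  refine hA.posSemidef_iff_eigenvalues_nonneg.mpr fun i => ?_
  have hμ : Module.End.HasEigenvalue (toLin' A) (hA.eigenvalues i : 𝕜) := by
    rw [Module.End.hasEigenvalue_iff_mem_spectrum, spectrum_toLin', ← RCLike.algebraMap_eq_ofReal,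
      spectrum.algebraMap_mem_iff]
    exact hA.eigenvalues_mem_spectrum_real i
  obtain ⟨k, hk⟩ := eigenvalue_mem_ball hμ
  rw [Metric.mem_closedBall, dist_comm, dist_eq_norm] at hk
  have hre := (RCLike.re_le_norm (A k k - hA.eigenvalues i)).trans (hk.trans (hdd k))
  simp only [map_sub, RCLike.ofReal_re] at hre
  simpa using hre

theorem scaled_dd_posSemidef {n : Type*} [Fintype n] [DecidableEq n]
    (A D : Matrix n n ℝ) (hAsymm : A.IsSymm)
    (hDdiag : ∀ i j, i ≠ j → D i j = 0) (hDpos : ∀ i, 0 < D i i)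
    (hdd : ∀ i, ∑ j ∈ Finset.univ.erase i, |(D * A * D) i j| ≤ (D * A * D) i i) :
    ∀ x : n → ℝ, 0 ≤ x ⬝ᵥ A.mulVec x := by
  have hDisDiag : D.IsDiag := hDdiag
  have hDstar : star D = D := by
    rw [star_eq_conjTranspose, conjTranspose_eq_transpose_of_trivial, hDisDiag.isSymm.eq]
  have hDunit : IsUnit D := by
    rw [← hDisDiag.diagonal_diag, isUnit_diagonal, Pi.isUnit_iff]
    exact fun i => (hDpos i).ne'.isUnit
  have hDAD : (D * A * star D).PosSemidef := by
    refine IsHermitian.posSemidef_of_sum_norm_offDiag_le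
      (isHermitian_mul_mul_conjTranspose _ (isHermitian_iff_isSymm.mpr hAsymm)) ?_
    simpa [hDstar] using hdd
  intro x
  simpa using (hDunit.posSemidef_star_right_conjugate_iff.mp hDAD).dotProduct_mulVec_nonneg x
end

section
/- Every diagonally dominant symmetric matrix with nonnegative diagonal is scaled diagonally dominant; that is, it can be written as a sum ∑_{i<j} M^{ij} of positive semidefinite symmetric matrices each supported on the entries indexed by {i,j}, possibly plus a nonnegative diagonal matrix. -/
open Matrix

theorem dd_is_sdd {n : Type*} [Fintype n] [DecidableEq n] [LinearOrder n]
    (A : Matrix n n ℝ) (hsymm : A.IsSymm)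
    (hdd : ∀ i, ∑ j ∈ Finset.univ.erase i, |A i j| ≤ A i i) :
    ∃ (M : n → n → Matrix n n ℝ) (d : n → ℝ),
      (∀ i, 0 ≤ d i) ∧
      (∀ i j, (M i j).IsSymm) ∧
      (∀ i j k l, (k ≠ i ∧ k ≠ j) ∨ (l ≠ i ∧ l ≠ j) → M i j k l = 0) ∧
      (∀ i j, ∀ x : n → ℝ, 0 ≤ x ⬝ᵥ (M i j).mulVec x) ∧
      A = Matrix.diagonal d + ∑ i, ∑ j ∈ Finset.univ.filter (fun j => i < j), M i j := by
  have hsa : ∀ i j, A j i = A i j := fun i j => hsymm.apply i j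
  set M : n → n → Matrix n n ℝ := fun i j => Matrix.of fun k l =>
    (if k = i ∧ l = i then |A i j| else 0) +
    (if k = j ∧ l = j then |A i j| else 0) +
    (if i ≠ j ∧ k = i ∧ l = j then A i j else 0) +
    (if i ≠ j ∧ k = j ∧ l = i then A i j else 0) with hM
  set d : n → ℝ := fun i => A i i - ∑ j ∈ Finset.univ.erase i, |A i j| with hd
  refine ⟨M, d, fun i => sub_nonneg.mpr (hdd i), ?_, ?_, ?_, ?_⟩
  · -- symmetry
    intro i j
    ext k l
    simp only [Matrix.transpose_apply, hM, Matrix.of_apply]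
    by_cases hk : k = i <;> by_cases hl : l = i <;> by_cases hk' : k = j <;>
      by_cases hl' : l = j <;> simp_all
  · -- support
    intro i j k l h
    simp only [hM, Matrix.of_apply]
    rcases h with ⟨h1, h2⟩ | ⟨h1, h2⟩ <;> simp [h1, h2]
  · -- PSD
    intro i j x
    have hform : x ⬝ᵥ (M i j).mulVec x =
        ∑ k, ∑ l, x k * ((M i j) k l * x l) := by
      simp [Matrix.mulVec, dotProduct, Finset.mul_sum]
    rw [hform]
    have pull : ∀ (c : Prop) [Decidable c] (f : n → ℝ),
        (∑ y, if c then f y else 0) = if c then (∑ y, f y) else 0 := by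
      intro c _ f; split <;> simp
    simp only [hM, Matrix.of_apply, mul_add, add_mul, mul_ite, ite_mul, mul_zero, zero_mul,
      Finset.sum_add_distrib, ite_and]
    simp only [pull, Finset.sum_ite_eq', Finset.mem_univ, if_true]
    rcases eq_or_ne i j with rfl | hij
    · simp only [ne_eq, not_true_eq_false, if_false, Finset.sum_const_zero, add_zero,
        Finset.sum_ite_eq', Finset.mem_univ, if_true]
      nlinarith [abs_nonneg (A i i), sq_nonneg (x i)]
    · simp only [hij, ne_eq, not_false_eq_true, if_true, Finset.sum_ite_eq',
        Finset.mem_univ]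
      nlinarith [sq_nonneg (x i + x j), sq_nonneg (x i - x j), le_abs_self (A i j),
        neg_abs_le (A i j)]
  · -- decomposition
    ext k l
    have hsum : (∑ i, ∑ j ∈ Finset.univ.filter (fun j => i < j), M i j) k l =
        ∑ i, ∑ j ∈ Finset.univ.filter (fun j => i < j), M i j k l := by
      simp [Matrix.sum_apply]
    rw [Matrix.add_apply, hsum]
    simp only [hM, Matrix.of_apply]
    rw [show (∑ i, ∑ j ∈ Finset.univ.filter (fun j => i < j),
        ((if k = i ∧ l = i then |A i j| else 0) +
         (if k = j ∧ l = j then |A i j| else 0) +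
         (if i ≠ j ∧ k = i ∧ l = j then A i j else 0) +
         (if i ≠ j ∧ k = j ∧ l = i then A i j else 0))) =
        (∑ i, ∑ j ∈ Finset.univ.filter (fun j => i < j), (if k = i ∧ l = i then |A i j| else 0)) +
        (∑ i, ∑ j ∈ Finset.univ.filter (fun j => i < j), (if k = j ∧ l = j then |A i j| else 0)) +
        (∑ i, ∑ j ∈ Finset.univ.filter (fun j => i < j), (if i ≠ j ∧ k = i ∧ l = j then A i j else 0)) +
        (∑ i, ∑ j ∈ Finset.univ.filter (fun j => i < j), (if i ≠ j ∧ k = j ∧ l = i then A i j else 0))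
        from by rw [← Finset.sum_add_distrib, ← Finset.sum_add_distrib, ← Finset.sum_add_distrib]
                exact Finset.sum_congr rfl fun i _ => by
                  rw [← Finset.sum_add_distrib, ← Finset.sum_add_distrib, ← Finset.sum_add_distrib]]
    -- compute each of the four sums
    have T1 : (∑ i, ∑ j ∈ Finset.univ.filter (fun j => i < j),
        (if k = i ∧ l = i then |A i j| else 0)) =
        if l = k then ∑ j ∈ Finset.univ.filter (fun j => k < j), |A k j| else 0 := by
      have : ∀ i, (∑ j ∈ Finset.univ.filter (fun j => i < j),
          (if k = i ∧ l = i then |A i j| else 0)) =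
          if i = k then (if l = k then ∑ j ∈ Finset.univ.filter (fun j => k < j), |A k j| else 0)
          else 0 := by
        intro i
        by_cases h1 : i = k
        · subst h1
          by_cases h2 : l = i <;> simp [h2]
        · have : ¬(k = i ∧ l = i) := fun ⟨h, _⟩ => h1 h.symm
          simp [this, h1]
      rw [Finset.sum_congr rfl fun i _ => this i, Finset.sum_ite_eq' Finset.univ k]
      simp
    have T2 : (∑ i, ∑ j ∈ Finset.univ.filter (fun j => i < j),
        (if k = j ∧ l = j then |A i j| else 0)) =
        if l = k then ∑ i ∈ Finset.univ.filter (fun i => i < k), |A i k| else 0 := by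
      have h1 : ∀ i, (∑ j ∈ Finset.univ.filter (fun j => i < j),
          (if k = j ∧ l = j then |A i j| else 0)) =
          if i < k then (if l = k then |A i k| else 0) else 0 := by
        intro i
        have : ∀ j, (if k = j ∧ l = j then |A i j| else 0) =
            if j = k then (if l = k then |A i k| else 0) else 0 := by
          intro j
          by_cases h2 : j = k
          · subst h2; by_cases h3 : l = j <;> simp [h3]
          · have : ¬(k = j ∧ l = j) := fun ⟨h, _⟩ => h2 h.symm
            simp [this, h2]
        rw [Finset.sum_congr rfl fun j _ => this j, Finset.sum_ite_eq']
        simp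
      rw [Finset.sum_congr rfl fun i _ => h1 i]
      by_cases h2 : l = k
      · simp [h2, Finset.sum_filter]
      · simp [h2]
    have T3 : (∑ i, ∑ j ∈ Finset.univ.filter (fun j => i < j),
        (if i ≠ j ∧ k = i ∧ l = j then A i j else 0)) =
        if k < l then A k l else 0 := by
      have h1 : ∀ i, (∑ j ∈ Finset.univ.filter (fun j => i < j),
          (if i ≠ j ∧ k = i ∧ l = j then A i j else 0)) =
          if i = k then (if k < l then A k l else 0) else 0 := by
        intro i
        have : ∀ j, (if i ≠ j ∧ k = i ∧ l = j then A i j else 0) =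
            if j = l then (if i ≠ l ∧ k = i then A i l else 0) else 0 := by
          intro j
          by_cases h2 : j = l
          · subst h2; by_cases h3 : i ≠ j ∧ k = i <;> simp [h3]
          · have : ¬(i ≠ j ∧ k = i ∧ l = j) := fun ⟨_, _, h⟩ => h2 h.symm
            simp [this, h2]
        rw [Finset.sum_congr rfl fun j _ => this j, Finset.sum_ite_eq']
        by_cases h2 : i = k
        · subst h2
          by_cases h3 : i < l
          · have h4 : i ≠ l := ne_of_lt h3
            simp [h3, h4]
          · simp [h3]
        · have : ¬(i ≠ l ∧ k = i) := fun ⟨_, h⟩ => h2 h.symm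
          simp [this, h2]
      rw [Finset.sum_congr rfl fun i _ => h1 i, Finset.sum_ite_eq' Finset.univ k]
      simp
    have T4 : (∑ i, ∑ j ∈ Finset.univ.filter (fun j => i < j),
        (if i ≠ j ∧ k = j ∧ l = i then A i j else 0)) =
        if l < k then A l k else 0 := by
      have h1 : ∀ i, (∑ j ∈ Finset.univ.filter (fun j => i < j),
          (if i ≠ j ∧ k = j ∧ l = i then A i j else 0)) =
          if i = l then (if l < k then A l k else 0) else 0 := by
        intro i
        have : ∀ j, (if i ≠ j ∧ k = j ∧ l = i then A i j else 0) =
            if j = k then (if i ≠ k ∧ l = i then A i k else 0) else 0 := by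
          intro j
          by_cases h2 : j = k
          · subst h2; by_cases h3 : i ≠ j ∧ l = i <;> simp [h3]
          · have : ¬(i ≠ j ∧ k = j ∧ l = i) := fun ⟨_, h, _⟩ => h2 h.symm
            simp [this, h2]
        rw [Finset.sum_congr rfl fun j _ => this j, Finset.sum_ite_eq']
        by_cases h2 : i = l
        · subst h2
          by_cases h3 : i < k
          · have h4 : i ≠ k := ne_of_lt h3
            simp [h3, h4]
          · simp [h3]
        · have : ¬(i ≠ k ∧ l = i) := fun ⟨_, h⟩ => h2 h.symm
          simp [this, h2]
      rw [Finset.sum_congr rfl fun i _ => h1 i, Finset.sum_ite_eq' Finset.univ l]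
      simp
    rw [T1, T2, T3, T4]
    rcases eq_or_ne k l with rfl | hkl
    · simp only [if_pos rfl, lt_irrefl, if_false, add_zero, if_true, Matrix.diagonal_apply_eq]
      have hunion : (Finset.univ.filter (fun j => k < j)) ∪
          (Finset.univ.filter (fun j => j < k)) = Finset.univ.erase k := by
        ext j
        simp only [Finset.mem_union, Finset.mem_filter, Finset.mem_univ, true_and,
          Finset.mem_erase, and_true]
        constructor
        · rintro (h | h) he
          · subst he; exact lt_irrefl _ h
          · subst he; exact lt_irrefl _ h
        · intro h
          exact (Ne.lt_or_gt h).elim Or.inr Or.inl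
      have hdisj : Disjoint (Finset.univ.filter (fun j => k < j))
          (Finset.univ.filter (fun j => j < k)) := by
        rw [Finset.disjoint_filter]
        intro x _ h1 h2
        exact absurd (h1.trans h2) (lt_irrefl k)
      have : ∑ j ∈ Finset.univ.erase k, |A k j| =
          (∑ j ∈ Finset.univ.filter (fun j => k < j), |A k j|) +
          (∑ i ∈ Finset.univ.filter (fun i => i < k), |A i k|) := by
        rw [← hunion, Finset.sum_union hdisj]
        congr 1
        exact Finset.sum_congr rfl fun i _ => by rw [hsa]
      simp only [hd]
      linarith [this]
    · rw [Matrix.diagonal_apply_ne _ hkl]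
      have h2 : l ≠ k := Ne.symm hkl
      simp only [h2, if_false, zero_add]
      rcases lt_trichotomy k l with h | h | h
      · simp [h, not_lt_of_gt h]
      · exact absurd h hkl
      · simp [h, not_lt_of_gt h, hsa]
end

section
/- If p(x) = z(x)ᵀ Q z(x) where Q is a symmetric diagonally dominant matrix with nonnegative diagonal and z(x) is a vector of monomials, then p can be written in the form p = ∑ᵢ αᵢ mᵢ² + ∑_{i,j} βᵢⱼ⁺ (mᵢ + mⱼ)² + βᵢⱼ⁻ (mᵢ − mⱼ)² with monomials mᵢ and nonnegative constants αᵢ, βᵢⱼ⁺, βᵢⱼ⁻; in particular p is a sum of squares with rational-combination structure. -/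
open MvPolynomial Finset

lemma binom_aux {σ : Type*} (a b : ℝ) (x y : MvPolynomial σ ℝ) :
    C (a + b) * (x + y) ^ 2 + C (a - b) * (x - y) ^ 2
      = C (2 * a) * x ^ 2 + C (2 * a) * y ^ 2 + C (4 * b) * (x * y) := by
  simp only [map_add, map_sub, map_mul, map_ofNat]
  ring

theorem dsos_binomial_squares {n m : ℕ} (p : MvPolynomial (Fin n) ℝ)
    (z : Fin m → MvPolynomial (Fin n) ℝ)
    (hmono : ∀ i, ∃ e : Fin n →₀ ℕ, z i = MvPolynomial.monomial e 1)
    (Q : Matrix (Fin m) (Fin m) ℝ) (hQsymm : Q.IsSymm)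
    (hQdd : ∀ i, ∑ j ∈ Finset.univ.erase i, |Q i j| ≤ Q i i)
    (hp : p = ∑ i, ∑ j, MvPolynomial.C (Q i j) * (z i * z j)) :
    ∃ (α : Fin m → ℝ) (βp βm : Fin m → Fin m → ℝ),
      (∀ i, 0 ≤ α i) ∧ (∀ i j, 0 ≤ βp i j) ∧ (∀ i j, 0 ≤ βm i j) ∧
      p = ∑ i, MvPolynomial.C (α i) * (z i) ^ 2 +
          ∑ i, ∑ j, (MvPolynomial.C (βp i j) * (z i + z j) ^ 2 +
                     MvPolynomial.C (βm i j) * (z i - z j) ^ 2) := by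
  classical
  refine ⟨fun i => Q i i - ∑ j ∈ Finset.univ.erase i, |Q i j|,
    fun i j => if i = j then 0 else (|Q i j| + Q i j) / 4,
    fun i j => if i = j then 0 else (|Q i j| - Q i j) / 4, ?_, ?_, ?_, ?_⟩
  · intro i; exact sub_nonneg.mpr (hQdd i)
  · intro i j; dsimp only; split
    · exact le_refl _
    · have := neg_abs_le (Q i j); linarith
  · intro i j; dsimp only; split
    · exact le_refl _
    · have := le_abs_self (Q i j); linarith
  · subst hp
    have hQs : ∀ i j, Q j i = Q i j := fun i j => by
      have := congrFun (congrFun hQsymm j) i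
      simpa [Matrix.transpose_apply] using this.symm
    -- the per-term identity
    have key : ∀ i j : Fin m,
        (C (if i = j then (0:ℝ) else (|Q i j| + Q i j) / 4) * (z i + z j) ^ 2 +
         C (if i = j then (0:ℝ) else (|Q i j| - Q i j) / 4) * (z i - z j) ^ 2)
        = C (if i = j then (0:ℝ) else |Q i j| / 2) * (z i) ^ 2
          + C (if i = j then (0:ℝ) else |Q i j| / 2) * (z j) ^ 2
          + C (if i = j then (0:ℝ) else Q i j) * (z i * z j) := by
      intro i j
      by_cases h : i = j
      · simp [h]
      · simp only [if_neg h]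
        rw [show (|Q i j| + Q i j) / 4 = |Q i j| / 4 + Q i j / 4 from by ring,
            show (|Q i j| - Q i j) / 4 = |Q i j| / 4 - Q i j / 4 from by ring,
            binom_aux]
        rw [show 2 * (|Q i j| / 4) = |Q i j| / 2 from by ring,
            show 4 * (Q i j / 4) = Q i j from by ring]
    simp only [key]
    -- split the double sum
    simp only [Finset.sum_add_distrib]
    have hsum1 : ∀ i : Fin m,
        ∑ j, C (if i = j then (0:ℝ) else |Q i j| / 2) * (z i) ^ 2
          = C ((∑ j ∈ Finset.univ.erase i, |Q i j|) / 2) * (z i) ^ 2 := by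
      intro i
      rw [← Finset.sum_mul, ← map_sum]
      congr 2
      rw [← Finset.add_sum_erase _ _ (Finset.mem_univ i), if_pos rfl, zero_add,
          Finset.sum_div]
      refine Finset.sum_congr rfl fun j hj => ?_
      rw [if_neg (Finset.ne_of_mem_erase hj).symm]
    have hsum2 :
        (∑ i, ∑ j, C (if i = j then (0:ℝ) else |Q i j| / 2) * (z j) ^ 2)
          = ∑ i, C ((∑ j ∈ Finset.univ.erase i, |Q i j|) / 2) * (z i) ^ 2 := by
      rw [Finset.sum_comm]
      refine Finset.sum_congr rfl fun j _ => ?_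
      rw [← hsum1 j]
      refine Finset.sum_congr rfl fun i _ => ?_
      congr 2
      by_cases h : j = i
      · simp [h]
      · rw [if_neg h, if_neg (fun hc => h hc.symm), hQs]
    have hsum3 : ∀ i : Fin m,
        ∑ j, C (if i = j then (0:ℝ) else Q i j) * (z i * z j)
          = (∑ j, C (Q i j) * (z i * z j)) - C (Q i i) * (z i) ^ 2 := by
      intro i
      rw [← Finset.add_sum_erase _ (fun j => C (if i = j then (0:ℝ) else Q i j) * (z i * z j)) (Finset.mem_univ i),
          ← Finset.add_sum_erase _ (fun j => C (Q i j) * (z i * z j)) (Finset.mem_univ i)]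
      rw [if_pos rfl, map_zero, zero_mul, zero_add]
      have : ∑ j ∈ Finset.univ.erase i, C (if i = j then (0:ℝ) else Q i j) * (z i * z j)
          = ∑ j ∈ Finset.univ.erase i, C (Q i j) * (z i * z j) := by
        refine Finset.sum_congr rfl fun j hj => ?_
        rw [if_neg (Finset.ne_of_mem_erase hj).symm]
      rw [this, sq]
      ring
    simp only [hsum1, hsum3]
    rw [hsum2]
    rw [Finset.sum_sub_distrib]
    have hD : (∑ i, C (Q i i - ∑ j ∈ Finset.univ.erase i, |Q i j|) * (z i) ^ 2)
        + ∑ i, C ((∑ j ∈ Finset.univ.erase i, |Q i j|) / 2) * (z i) ^ 2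
        + ∑ i, C ((∑ j ∈ Finset.univ.erase i, |Q i j|) / 2) * (z i) ^ 2
        = ∑ i, (C (Q i i) : MvPolynomial (Fin n) ℝ) * (z i) ^ 2 := by
      rw [← Finset.sum_add_distrib, ← Finset.sum_add_distrib]
      refine Finset.sum_congr rfl fun i _ => ?_
      have hC : C (Q i i - ∑ j ∈ Finset.univ.erase i, |Q i j|)
          + C ((∑ j ∈ Finset.univ.erase i, |Q i j|) / 2)
          + C ((∑ j ∈ Finset.univ.erase i, |Q i j|) / 2)
          = (C (Q i i) : MvPolynomial (Fin n) ℝ) := by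
        rw [← map_add, ← map_add]; congr 1; ring
      linear_combination (z i ^ 2) * hC
    linear_combination -hD
end

section
/- If p(x) = ∑ᵢ αᵢ mᵢ² + ∑_{i,j} (βᵢ mᵢ + γⱼ mⱼ)² + (δᵢ mᵢ − εⱼ mⱼ)² for monomials mᵢ, mⱼ and nonnegative reals αᵢ, βᵢ, γⱼ, δᵢ, εⱼ, then p admits a Gram representation p = zᵀQz with Q scaled diagonally dominant (a sum of psd matrices supported on 2×2 principal blocks), where z is the vector of the monomials involved. -/
open Matrix Finset


/-- `Q` is scaled diagonally dominant: a sum of psd symmetric matrices each supported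
on a 2×2 principal submatrix. -/
def Matrix.IsSdd {m : ℕ} (Q : Matrix (Fin m) (Fin m) ℝ) : Prop :=
  ∃ M : Fin m → Fin m → Matrix (Fin m) (Fin m) ℝ,
    (∀ i j, (M i j).IsSymm) ∧
    (∀ i j k l, (k ≠ i ∧ k ≠ j) ∨ (l ≠ i ∧ l ≠ j) → M i j k l = 0) ∧
    (∀ i j, ∀ v : Fin m → ℝ, 0 ≤ v ⬝ᵥ (M i j).mulVec v) ∧
    Q = ∑ i, ∑ j ∈ Finset.univ.filter (fun j => i ≤ j), M i j

namespace SddAux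

variable {n N : ℕ}

/-- The quadratic-form polynomial map, as an additive hom. -/
noncomputable def quadHom (z : Fin N → MvPolynomial (Fin n) ℝ) :
    Matrix (Fin N) (Fin N) ℝ →+ MvPolynomial (Fin n) ℝ where
  toFun Q := ∑ i, ∑ j, MvPolynomial.C (Q i j) * (z i * z j)
  map_zero' := by simp
  map_add' A B := by
    simp [Matrix.add_apply, map_add, add_mul, Finset.sum_add_distrib]

lemma quadHom_vecMulVec (z : Fin N → MvPolynomial (Fin n) ℝ) (v : Fin N → ℝ) :
    quadHom z (vecMulVec v v) = (∑ k, MvPolynomial.C (v k) * z k) ^ 2 := by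
  rw [sq, Finset.sum_mul_sum]
  simp only [quadHom, AddMonoidHom.coe_mk, ZeroHom.coe_mk, vecMulVec_apply,
    MvPolynomial.C_mul]
  exact Finset.sum_congr rfl fun i _ => Finset.sum_congr rfl fun j _ => by ring

lemma dot_vecMulVec (v w : Fin N → ℝ) :
    v ⬝ᵥ (vecMulVec w w).mulVec v = (w ⬝ᵥ v) ^ 2 := by
  simp only [dotProduct, Matrix.mulVec, vecMulVec_apply, dotProduct]
  rw [sq, Finset.sum_mul_sum]
  refine Finset.sum_congr rfl fun i _ => ?_
  rw [Finset.mul_sum]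
  exact Finset.sum_congr rfl fun j _ => by ring

lemma single_sum (z : Fin N → MvPolynomial (Fin n) ℝ) (i : Fin N) (c : ℝ) :
    ∑ k, MvPolynomial.C (if k = i then c else 0) * z k = MvPolynomial.C c * z i := by
  rw [Finset.sum_eq_single i]
  · simp
  · intro b _ hb; simp [hb]
  · simp

lemma sym_sum {M : Type*} [AddCommMonoid M] (f : Fin N → Fin N → M) :
    ∑ i, ∑ j, f i j =
      ∑ i, ∑ j ∈ Finset.univ.filter (fun j => i ≤ j),
        (if i = j then f i i else f i j + f j i) := by
  have hsplit : ∀ i : Fin N, ∑ j, f i j =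
      ∑ j ∈ Finset.univ.filter (fun j => i ≤ j), f i j
        + ∑ j ∈ Finset.univ.filter (fun j => j < i), f i j := by
    intro i
    rw [← Finset.sum_filter_add_sum_filter_not Finset.univ (fun j => i ≤ j)]
    congr 1
    apply Finset.sum_congr _ fun _ _ => rfl
    ext j; simp [not_le]
  have hswap : ∑ i, ∑ j ∈ Finset.univ.filter (fun j => j < i), f i j
      = ∑ j, ∑ i ∈ Finset.univ.filter (fun i => j < i), f i j :=
    Finset.sum_comm' (by intro x y; simp)
  have hfilter : ∀ i : Fin N, Finset.univ.filter (fun j => i ≤ j)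
      = insert i (Finset.univ.filter (fun j => i < j)) := by
    intro i; ext j
    simp [le_iff_lt_or_eq, or_comm, eq_comm]
  calc ∑ i, ∑ j, f i j
      = ∑ i, (∑ j ∈ Finset.univ.filter (fun j => i ≤ j), f i j
          + ∑ j ∈ Finset.univ.filter (fun j => j < i), f i j) :=
        Finset.sum_congr rfl fun i _ => hsplit i
    _ = ∑ i, ∑ j ∈ Finset.univ.filter (fun j => i ≤ j), f i j
          + ∑ i, ∑ j ∈ Finset.univ.filter (fun j => i < j), f j i := by
        rw [Finset.sum_add_distrib, hswap]
    _ = _ := by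
        rw [← Finset.sum_add_distrib]
        apply Finset.sum_congr rfl
        intro i _
        rw [hfilter i, Finset.sum_insert (by simp), Finset.sum_insert (by simp),
          if_pos rfl]
        rw [add_assoc]
        congr 1
        rw [← Finset.sum_add_distrib]
        apply Finset.sum_congr rfl
        intro j hj
        rw [if_neg (by simp at hj; exact ne_of_lt hj)]


lemma quadHom_smul (z : Fin N → MvPolynomial (Fin n) ℝ) (c : ℝ)
    (A : Matrix (Fin N) (Fin N) ℝ) :
    quadHom z (c • A) = MvPolynomial.C c * quadHom z A := by
  simp only [quadHom, AddMonoidHom.coe_mk, ZeroHom.coe_mk, Matrix.smul_apply,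
    smul_eq_mul, MvPolynomial.C_mul, Finset.mul_sum, mul_assoc]

lemma vecMulVec_isSymm (v : Fin N → ℝ) : (vecMulVec v v).IsSymm := by
  ext k l; simp [vecMulVec_apply, mul_comm, Matrix.transpose_apply]

end SddAux

open SddAux in
theorem binomial_squares_sdd_gram {n N : ℕ} (p : MvPolynomial (Fin n) ℝ)
    (z : Fin N → MvPolynomial (Fin n) ℝ)
    (hmono : ∀ i, ∃ e : Fin n →₀ ℕ, z i = MvPolynomial.monomial e 1)
    (α β γ δ ε : Fin N → ℝ)
    (hα : ∀ i, 0 ≤ α i) (hβ : ∀ i, 0 ≤ β i) (hγ : ∀ i, 0 ≤ γ i)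
    (hδ : ∀ i, 0 ≤ δ i) (hε : ∀ i, 0 ≤ ε i)
    (hp : p = ∑ i, MvPolynomial.C (α i) * (z i) ^ 2 +
          ∑ i, ∑ j, ((MvPolynomial.C (β i) * z i + MvPolynomial.C (γ j) * z j) ^ 2 +
                     (MvPolynomial.C (δ i) * z i - MvPolynomial.C (ε j) * z j) ^ 2)) :
    ∃ Q : Matrix (Fin N) (Fin N) ℝ, Q.IsSdd ∧
      p = ∑ i, ∑ j, MvPolynomial.C (Q i j) * (z i * z j) := by
  classical
  set e : Fin N → Fin N → ℝ := fun i k => if k = i then (1 : ℝ) else 0 with he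
  set b : Fin N → Fin N → Fin N → ℝ :=
    fun i j k => (if k = i then β i else 0) + (if k = j then γ j else 0) with hb
  set d : Fin N → Fin N → Fin N → ℝ :=
    fun i j k => (if k = i then δ i else 0) - (if k = j then ε j else 0) with hd
  set B : Fin N → Fin N → Matrix (Fin N) (Fin N) ℝ :=
    fun i j => vecMulVec (b i j) (b i j) + vecMulVec (d i j) (d i j) with hB
  set D : Fin N → Matrix (Fin N) (Fin N) ℝ :=
    fun i => α i • vecMulVec (e i) (e i) with hD
  set Q : Matrix (Fin N) (Fin N) ℝ := ∑ i, D i + ∑ i, ∑ j, B i j with hQ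
  set M : Fin N → Fin N → Matrix (Fin N) (Fin N) ℝ :=
    fun i j => (if i = j then D i else 0) +
      (if i = j then B i i else B i j + B j i) with hM
  have hbz : ∀ k i j, (k ≠ i ∧ k ≠ j) → b i j k = 0 := by
    intro k i j ⟨h1, h2⟩; simp [hb, h1, h2]
  have hdz : ∀ k i j, (k ≠ i ∧ k ≠ j) → d i j k = 0 := by
    intro k i j ⟨h1, h2⟩; simp [hd, h1, h2]
  refine ⟨Q, ⟨M, ?_, ?_, ?_, ?_⟩, ?_⟩
  · -- symmetry
    intro i j
    have hsB : ∀ i j, (B i j).IsSymm := fun i j =>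
      (vecMulVec_isSymm _).add (vecMulVec_isSymm _)
    have hsD : ∀ i, (D i).IsSymm := fun i => (vecMulVec_isSymm (e i)).smul _
    by_cases h : i = j
    · simp only [hM, if_pos h]; exact (hsD i).add (hsB i i)
    · simp only [hM, if_neg h]
      exact (Matrix.isSymm_zero.add ((hsB i j).add (hsB j i)))
  · -- support
    intro i j k l hkl
    have hBz : ∀ i' j', (k ≠ i' ∧ k ≠ j') ∨ (l ≠ i' ∧ l ≠ j') → B i' j' k l = 0 := by
      intro i' j' h
      rcases h with h | h
      · simp [hB, vecMulVec_apply, hbz k i' j' h, hdz k i' j' h]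
      · simp [hB, vecMulVec_apply, hbz l i' j' h, hdz l i' j' h]
    have hDz : ∀ i', (k ≠ i' ∧ k ≠ i') ∨ (l ≠ i' ∧ l ≠ i') → D i' k l = 0 := by
      intro i' h
      rcases h with ⟨h, -⟩ | ⟨h, -⟩ <;>
        simp [hD, he, vecMulVec_apply, Matrix.smul_apply, h]
    by_cases h : i = j
    · subst h
      have hMe : M i i = D i + B i i := by simp [hM]
      rw [hMe, Matrix.add_apply, hDz i (by tauto), hBz i i (by tauto), add_zero]
    · have hMe : M i j = B i j + B j i := by simp [hM, h]
      rw [hMe, Matrix.add_apply, hBz i j (by tauto), hBz j i (by tauto), add_zero]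
  · -- psd
    intro i j v
    have hBpsd : ∀ i' j', 0 ≤ v ⬝ᵥ (B i' j').mulVec v := by
      intro i' j'
      rw [hB]
      simp only [Matrix.add_mulVec, dotProduct_add, dot_vecMulVec]
      positivity
    have hDpsd : ∀ i', 0 ≤ v ⬝ᵥ (D i').mulVec v := by
      intro i'
      rw [hD]
      simp only [Matrix.smul_mulVec, dotProduct_smul, smul_eq_mul,
        dot_vecMulVec]
      exact mul_nonneg (hα i') (sq_nonneg _)
    by_cases h : i = j
    · have hMe : M i j = D i + B i i := by simp [hM, h]
      rw [hMe, Matrix.add_mulVec, dotProduct_add]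
      exact add_nonneg (hDpsd i) (hBpsd i i)
    · have hMe : M i j = B i j + B j i := by simp [hM, h]
      rw [hMe, Matrix.add_mulVec, dotProduct_add]
      exact add_nonneg (hBpsd i j) (hBpsd j i)
  · -- decomposition
    have h1 : ∑ i, ∑ j, B i j =
        ∑ i, ∑ j ∈ Finset.univ.filter (fun j => i ≤ j),
          (if i = j then B i i else B i j + B j i) := sym_sum B
    have h2 : ∑ i, D i =
        ∑ i, ∑ j ∈ Finset.univ.filter (fun j => i ≤ j),
          (if i = j then D i else 0) := by
      apply Finset.sum_congr rfl
      intro i _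
      rw [Finset.sum_ite_eq]
      simp
    rw [hQ, h1, h2, ← Finset.sum_add_distrib]
    apply Finset.sum_congr rfl
    intro i _
    rw [← Finset.sum_add_distrib]
  · -- polynomial identity
    have key : ∑ i, ∑ j, MvPolynomial.C (Q i j) * (z i * z j) = quadHom z Q := rfl
    rw [key, hQ, map_add, map_sum, map_sum]
    have hDq : ∀ i, quadHom z (D i) = MvPolynomial.C (α i) * (z i) ^ 2 := by
      intro i
      rw [hD, quadHom_smul, quadHom_vecMulVec]
      congr 1
      rw [single_sum z i 1]
      simp
    have hbq : ∀ i j, ∑ k, MvPolynomial.C (b i j k) * z k =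
        MvPolynomial.C (β i) * z i + MvPolynomial.C (γ j) * z j := by
      intro i j
      simp only [hb, map_add, add_mul, Finset.sum_add_distrib]
      rw [single_sum, single_sum]
    have hdq : ∀ i j, ∑ k, MvPolynomial.C (d i j k) * z k =
        MvPolynomial.C (δ i) * z i - MvPolynomial.C (ε j) * z j := by
      intro i j
      simp only [hd, map_sub, sub_mul, Finset.sum_sub_distrib]
      rw [single_sum, single_sum]
    have hBq : ∀ i j, quadHom z (B i j) =
        (MvPolynomial.C (β i) * z i + MvPolynomial.C (γ j) * z j) ^ 2 +
        (MvPolynomial.C (δ i) * z i - MvPolynomial.C (ε j) * z j) ^ 2 := by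
      intro i j
      rw [hB, map_add, quadHom_vecMulVec, quadHom_vecMulVec, hbq, hdq]
    rw [hp]
    congr 1
    · exact (Finset.sum_congr rfl fun i _ => (hDq i)).symm
    · refine (Finset.sum_congr rfl fun i _ => ?_).symm
      rw [map_sum]
      exact Finset.sum_congr rfl fun j _ => hBq i j
end
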